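/- arXiv:1609.03603 — 8 statements merged into one kernel-verified Lean document; each statement's English description precedes it below -/
import Mathlib

section
/- Fix w ∈ (0,1) and ε > 0. The function s_f(t) = 1/2 − (1/2)(1 − 2t/T_f)·√(w / (1 − (1 − 2t/T_f)²(1−w))) with T_f = √(1−w)/(ε√w) satisfies the ODE ds_f/dt = ε · Δ_w(s_f)³ / √(w(1−w)) where Δ_w(s) = √(1 − 4s(1−s)(1−w)), together with the boundary conditions s_f(0) = 0 and s_f(T_f) = 1. -/
/-- The fast schedule satisfies its defining ODE and boundary conditions. -/
theorem stmt4 (w ε : ℝ) (hw : w ∈ Set.Ioo (0:ℝ) 1) (hε : 0 < ε) :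
    let T : ℝ := Real.sqrt (1-w) / (ε * Real.sqrt w)
    let sf : ℝ → ℝ := fun t =>
      1/2 - (1/2) * (1 - 2*t/T) * Real.sqrt (w / (1 - (1 - 2*t/T)^2 * (1-w)))
    sf 0 = 0 ∧ sf T = 1 ∧
      ∀ t ∈ Set.Icc (0:ℝ) T, HasDerivAt sf
        (ε * (Real.sqrt (1 - 4*(sf t)*(1 - sf t)*(1-w)))^3 / Real.sqrt (w*(1-w))) t := by
  obtain ⟨hw0, hw1⟩ := hw
  have hw1' : 0 < 1 - w := by linarith
  have hsw : 0 < Real.sqrt w := Real.sqrt_pos.2 hw0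
  have hsr : 0 < Real.sqrt (1-w) := Real.sqrt_pos.2 hw1'
  have hswsq : Real.sqrt w ^ 2 = w := Real.sq_sqrt hw0.le
  have hsrsq : Real.sqrt (1-w) ^ 2 = (1-w) := Real.sq_sqrt hw1'.le
  intro T sf
  have hT : 0 < T := div_pos hsr (mul_pos hε hsw)
  refine ⟨?_, ?_, ?_⟩
  · show 1/2 - (1/2) * (1 - 2*0/T) * Real.sqrt (w / (1 - (1 - 2*0/T)^2 * (1-w))) = 0
    have e1 : (1:ℝ) - 2*0/T = 1 := by norm_num
    rw [e1, one_pow, one_mul, show (1:ℝ) - (1-w) = w by ring, div_self hw0.ne',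
      Real.sqrt_one]
    ring
  · show 1/2 - (1/2) * (1 - 2*T/T) * Real.sqrt (w / (1 - (1 - 2*T/T)^2 * (1-w))) = 1
    have e1 : (1:ℝ) - 2*T/T = -1 := by
      rw [mul_div_assoc, div_self hT.ne']; ring
    rw [e1, neg_one_sq, one_mul, show (1:ℝ) - (1-w) = w by ring, div_self hw0.ne',
      Real.sqrt_one]
    ring
  · intro t ht
    obtain ⟨ht0, htT⟩ := ht
    have hsf_fun : sf = fun x =>
        1/2 - (1/2) * (((1 - 2*x/T) * Real.sqrt w) /
          Real.sqrt (1 - (1 - 2*x/T)^2 * (1-w))) := by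
      funext x
      show 1/2 - (1/2) * (1 - 2*x/T) * Real.sqrt (w / (1 - (1 - 2*x/T)^2 * (1-w))) = _
      rw [Real.sqrt_div hw0.le]
      ring
    rw [hsf_fun]
    set u : ℝ := 1 - 2*t/T with hu_def
    set D : ℝ := 1 - u^2*(1-w) with hD_def
    have hu1 : -1 ≤ u := by
      have h2 : 2*t/T ≤ 2 := by rw [div_le_iff₀ hT]; linarith
      rw [hu_def]; linarith
    have hu2 : u ≤ 1 := by
      have h1 : 0 ≤ 2*t/T := by positivity
      rw [hu_def]; linarith
    have hu_sq : u^2 ≤ 1 := by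
      nlinarith [mul_nonneg (by linarith : (0:ℝ) ≤ 1-u) (by linarith : (0:ℝ) ≤ 1+u)]
    have hDw : w ≤ D := by
      have h := mul_le_mul_of_nonneg_right hu_sq hw1'.le
      rw [hD_def]; linarith
    have hDpos : 0 < D := lt_of_lt_of_le hw0 hDw
    have hsD : 0 < Real.sqrt D := Real.sqrt_pos.2 hDpos
    have hsDsq : Real.sqrt D ^ 2 = D := Real.sq_sqrt hDpos.le
    -- the gap squared equals w / D
    have hA : 1 - 4*(1/2 - (1/2) * ((u * Real.sqrt w) / Real.sqrt D)) *
        (1 - (1/2 - (1/2) * ((u * Real.sqrt w) / Real.sqrt D))) * (1-w) = w / D := by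
      have hx2 : (u * Real.sqrt w / Real.sqrt D)^2 = u^2 * w / D := by
        rw [div_pow, mul_pow, hswsq, hsDsq]
      have e : 1 - 4*(1/2 - (1/2) * ((u * Real.sqrt w) / Real.sqrt D)) *
          (1 - (1/2 - (1/2) * ((u * Real.sqrt w) / Real.sqrt D))) * (1-w)
          = w + (u * Real.sqrt w / Real.sqrt D)^2 * (1-w) := by ring
      rw [e, hx2]
      field_simp
      linear_combination w * hD_def
    rw [hA, Real.sqrt_div hw0.le, Real.sqrt_mul hw0.le]
    have hcube : (Real.sqrt w / Real.sqrt D)^3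
        = (w * Real.sqrt w) / (D * Real.sqrt D) := by
      have h3 : ∀ a:ℝ, a^3 = a^2*a := fun a => by ring
      rw [div_pow, h3, h3, hswsq, hsDsq]
    rw [hcube]
    have hval : ε * ((w * Real.sqrt w) / (D * Real.sqrt D)) /
        (Real.sqrt w * Real.sqrt (1-w)) = Real.sqrt w / (T * (D * Real.sqrt D)) := by
      have hTdef : T = Real.sqrt (1-w) / (ε * Real.sqrt w) := rfl
      rw [hTdef]
      clear_value u D
      field_simp
      linear_combination (-1 : ℝ) * hswsq
    rw [hval]
    -- now construct the derivative
    have hu' : HasDerivAt (fun x : ℝ => 1 - 2*x/T) (-(2/T)) t := by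
      have h1 : HasDerivAt (fun x : ℝ => 2*x/T) (2/T) t := by
        simpa using ((hasDerivAt_id t).const_mul 2).div_const T
      simpa using h1.const_sub 1
    have hnum : HasDerivAt (fun x : ℝ => (1 - 2*x/T) * Real.sqrt w)
        (-(2/T) * Real.sqrt w) t := hu'.mul_const _
    have hDfun : HasDerivAt (fun x : ℝ => 1 - (1 - 2*x/T)^2*(1-w))
        (-((2:ℕ) * u^1 * (-(2/T)) * (1-w))) t := by
      have := ((hu'.pow 2).mul_const (1-w)).const_sub 1
      simpa [← hu_def] using this
    have hDt : (1 - (1 - 2*t/T)^2*(1-w)) = D := by rw [hD_def, hu_def]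
    have hden : HasDerivAt (fun x : ℝ => Real.sqrt (1 - (1 - 2*x/T)^2*(1-w)))
        ((-((2:ℕ) * u^1 * (-(2/T)) * (1-w))) / (2 * Real.sqrt D)) t := by
      have := hDfun.sqrt (by rw [hDt]; exact hDpos.ne')
      simpa [hDt] using this
    have hdiv := hnum.div hden (by rw [hDt]; exact hsD.ne')
    have hfull := (hdiv.const_mul (1/2 : ℝ)).const_sub (1/2 : ℝ)
    refine hfull.congr_deriv ?_
    symm
    rw [hDt, ← hu_def]
    push_cast
    clear_value u D sf T
    field_simp
    linear_combination (1 - D) * hsDsq - D * hD_def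
end

section
/- Fix w ∈ (0,1) and ε > 0. Let φ_w = arctan(√((1−w)/w)) and T_s = φ_w/(ε√(w(1−w))). The function s_s(t) = 1/2 − (1/2)√(w/(1−w))·tan((1 − 2t/T_s)·φ_w) satisfies the ODE ds_s/dt = ε·Δ_w(s_s)², where Δ_w(s) = √(1 − 4s(1−s)(1−w)), with boundary conditions s_s(0) = 0 and s_s(T_s) = 1. -/
/-- The standard (Roland–Cerf) schedule satisfies ds/dt = ε Δ_w(s)² with the
boundary conditions s(0) = 0 and s(T_s) = 1. -/
theorem stmt5 (w ε : ℝ) (hw : w ∈ Set.Ioo (0:ℝ) 1) (hε : 0 < ε) :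
    let φw : ℝ := Real.arctan (Real.sqrt ((1-w)/w))
    let T : ℝ := φw / (ε * Real.sqrt (w*(1-w)))
    let ss : ℝ → ℝ := fun t =>
      1/2 - (1/2) * Real.sqrt (w/(1-w)) * Real.tan ((1 - 2*t/T) * φw)
    ss 0 = 0 ∧ ss T = 1 ∧
      ∀ t ∈ Set.Icc (0:ℝ) T, HasDerivAt ss
        (ε * (Real.sqrt (1 - 4*(ss t)*(1 - ss t)*(1-w)))^2) t := by
  intro φw T ss
  obtain ⟨hw0, hw1⟩ := hw
  have h1w : 0 < 1 - w := by linarith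
  set b : ℝ := Real.sqrt (w/(1-w)) with hbdef
  set a : ℝ := Real.sqrt ((1-w)/w) with hadef
  have hb2 : b ^ 2 = w/(1-w) := Real.sq_sqrt (by positivity)
  have hab : b * a = 1 := by
    rw [hbdef, hadef, ← Real.sqrt_mul (by positivity),
      show w/(1-w) * ((1-w)/w) = 1 by field_simp]
    exact Real.sqrt_one
  have htan : Real.tan φw = a := Real.tan_arctan _
  have hφpos : 0 < φw := by
    rw [← Real.arctan_zero]
    exact Real.arctan_strictMono (Real.sqrt_pos.mpr (by positivity))
  have hφlt : φw < Real.pi/2 := Real.arctan_lt_pi_div_two _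
  have hden : 0 < ε * Real.sqrt (w*(1-w)) := by positivity
  have hT : 0 < T := div_pos hφpos hden
  have hTne : T ≠ 0 := ne_of_gt hT
  have hφT : φw / T = ε * Real.sqrt (w*(1-w)) := by
    rw [show T = φw / (ε * Real.sqrt (w*(1-w))) from rfl]
    field_simp
  have hbw : b * Real.sqrt (w*(1-w)) = w := by
    rw [hbdef, ← Real.sqrt_mul (by positivity),
      show w/(1-w) * (w*(1-w)) = w^2 by field_simp]
    exact Real.sqrt_sq hw0.le
  have hs0 : ss 0 = 0 := by
    show 1/2 - 1/2 * b * Real.tan ((1 - 2*0/T) * φw) = 0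
    rw [show (1 - 2*0/T) * φw = φw by ring, htan]
    linarith [hab]
  have hsT : ss T = 1 := by
    show 1/2 - 1/2 * b * Real.tan ((1 - 2*T/T) * φw) = 1
    rw [show (1 - 2*T/T) * φw = -φw by rw [mul_div_assoc, div_self hTne]; ring, Real.tan_neg, htan]
    linarith [hab]
  refine ⟨hs0, hsT, ?_⟩
  intro t ht
  set θ : ℝ := (1 - 2*t/T) * φw with hθdef
  have h2t0 : 0 ≤ 2*t/T := div_nonneg (by linarith [ht.1]) hT.le
  have h2t2 : 2*t/T ≤ 2 := by
    rw [div_le_iff₀ hT]; linarith [ht.2]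
  have hθbound : |θ| ≤ φw := by
    rw [hθdef, abs_mul, abs_of_pos hφpos]
    have h1 : |1 - 2*t/T| ≤ 1 := abs_le.mpr ⟨by linarith, by linarith⟩
    nlinarith [hφpos]
  obtain ⟨hθ1, hθ2⟩ := abs_le.mp hθbound
  have hcos : 0 < Real.cos θ :=
    Real.cos_pos_of_mem_Ioo ⟨by linarith, by linarith⟩
  have hcosne : Real.cos θ ≠ 0 := ne_of_gt hcos
  -- value of ss t
  have hsst : ss t = 1/2 - 1/2 * b * Real.tan θ := rfl
  -- the expression under the sqrt
  have hb2' : b ^ 2 * (1 - w) = w := by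
    rw [hb2]; field_simp
  have hEeq : 1 - 4*(ss t)*(1 - ss t)*(1-w) = w * (1 + Real.tan θ ^ 2) := by
    rw [hsst]
    linear_combination (Real.tan θ ^ 2) * hb2'
  have hEpos : 0 ≤ 1 - 4*(ss t)*(1 - ss t)*(1-w) := by
    rw [hEeq]; positivity
  -- derivative of the inner affine map
  have hinner : HasDerivAt (fun u : ℝ => (1 - 2*u/T) * φw) ((0 - 2*1/T) * φw) t :=
    ((hasDerivAt_const t (1:ℝ)).sub
      (((hasDerivAt_id t).const_mul 2).div_const T)).mul_const φw
  -- derivative of tan ∘ inner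
  have htanD : HasDerivAt (fun u : ℝ => Real.tan ((1 - 2*u/T) * φw))
      (1 / Real.cos θ ^ 2 * ((0 - 2*1/T) * φw)) t :=
    by have h := Real.hasDerivAt_tan hcosne; rw [hθdef] at h ⊢; exact h.comp t hinner
  have hssD : HasDerivAt ss
      (-(1/2 * b * (1 / Real.cos θ ^ 2 * ((0 - 2*1/T) * φw)))) t :=
    (htanD.const_mul (1/2 * b)).const_sub (1/2)
  have hcos2 : 1 / Real.cos θ ^ 2 = 1 + Real.tan θ ^ 2 := by
    rw [← Real.inv_one_add_tan_sq hcosne]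
    field_simp
  have hkey : b * (φw / T) = ε * w := by
    rw [hφT, mul_left_comm, hbw]
  convert hssD using 1
  rw [Real.sq_sqrt hEpos, hEeq, hcos2]
  linear_combination (-(1:ℝ) - Real.tan θ ^ 2) * hkey
end

section
/- If |Q⟩, |R⟩, |S⟩ are unit vectors in a complex Hilbert space with |⟨Q|S⟩|² ≥ 1 − e₁² and |⟨R|S⟩|² ≥ 1 − e₂², where e₁, e₂ ≥ 0, then |⟨Q|R⟩|² ≥ 1 − (e₁ + e₂)². -/
set_option maxHeartbeats 1000000 in
/-- Triangle-type inequality for fidelities of unit vectors. -/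
theorem stmt7 {H : Type*} [NormedAddCommGroup H] [InnerProductSpace ℂ H]
    (Q R S : H) (hQ : ‖Q‖ = 1) (hR : ‖R‖ = 1) (hS : ‖S‖ = 1)
    (e₁ e₂ : ℝ) (he₁ : 0 ≤ e₁) (he₂ : 0 ≤ e₂)
    (h1 : 1 - e₁^2 ≤ ‖@inner ℂ _ _ Q S‖ ^ 2)
    (h2 : 1 - e₂^2 ≤ ‖@inner ℂ _ _ R S‖ ^ 2) :
    1 - (e₁ + e₂)^2 ≤ ‖@inner ℂ _ _ Q R‖ ^ 2 := by
  by_cases htriv : 1 ≤ (e₁ + e₂)^2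
  · nlinarith [sq_nonneg (‖@inner ℂ _ _ Q R‖)]
  push_neg at htriv
  set α : ℂ := @inner ℂ _ _ S Q with hα
  set β : ℂ := @inner ℂ _ _ S R with hβ
  set a : ℝ := ‖α‖ with ha
  set b : ℝ := ‖β‖ with hb
  set c : ℝ := ‖@inner ℂ _ _ Q R‖ with hc
  have haQS : ‖@inner ℂ _ _ Q S‖ = a := by
    rw [← inner_conj_symm Q S, ← hα]; simp [ha]
  have hbRS : ‖@inner ℂ _ _ R S‖ = b := by
    rw [← inner_conj_symm R S, ← hβ]; simp [hb]
  rw [haQS] at h1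
  rw [hbRS] at h2
  set Qp : H := Q - α • S with hQp
  set Rp : H := R - β • S with hRp
  have hSQ : (@inner ℂ _ _ Q S) = starRingEnd ℂ α := by rw [← inner_conj_symm Q S, ← hα]
  have hSR : (@inner ℂ _ _ R S) = starRingEnd ℂ β := by rw [← inner_conj_symm R S, ← hβ]
  -- norms of orthogonal parts
  have hnQp : ‖Qp‖^2 = 1 - a^2 := by
    have h := norm_sub_sq (𝕜 := ℂ) Q (α • S)
    rw [inner_smul_right, hSQ, Complex.mul_conj'] at h
    rw [norm_smul, hS, hQ] at h
    simp only [← ha, mul_one, one_pow, ← Complex.ofReal_pow,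
      RCLike.re_to_complex, Complex.ofReal_re] at h
    rw [hQp]; linarith
  have hnRp : ‖Rp‖^2 = 1 - b^2 := by
    have h := norm_sub_sq (𝕜 := ℂ) R (β • S)
    rw [inner_smul_right, hSR, Complex.mul_conj'] at h
    rw [norm_smul, hS, hR] at h
    simp only [← hb, mul_one, one_pow, ← Complex.ofReal_pow,
      RCLike.re_to_complex, Complex.ofReal_re] at h
    rw [hRp]; linarith
  -- inner product decomposition
  have hSS : (@inner ℂ _ _ S S) = 1 := by
    rw [inner_self_eq_norm_sq_to_K, hS]; norm_num
  have hdec : @inner ℂ _ _ Qp Rp = @inner ℂ _ _ Q R - starRingEnd ℂ α * β := by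
    rw [hQp, hRp]
    simp only [inner_sub_left, inner_sub_right, inner_smul_left, inner_smul_right, hSS,
      hSQ, hα, hβ]
    ring
  -- Cauchy-Schwarz on orthogonal parts
  have hCS : ‖@inner ℂ _ _ Qp Rp‖ ≤ ‖Qp‖ * ‖Rp‖ := by
    exact norm_inner_le_norm Qp Rp
  -- key inequality: a*b - ‖Qp‖*‖Rp‖ ≤ c
  have hkey : a * b - ‖Qp‖ * ‖Rp‖ ≤ c := by
    have h1' : a * b = ‖starRingEnd ℂ α * β‖ := by
      rw [norm_mul, Complex.norm_conj, ha, hb]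
    have h2' : ‖starRingEnd ℂ α * β‖ ≤ c + ‖@inner ℂ _ _ Qp Rp‖ := by
      have : starRingEnd ℂ α * β = @inner ℂ _ _ Q R - @inner ℂ _ _ Qp Rp := by
        rw [hdec]; ring
      rw [this]
      calc ‖@inner ℂ _ _ Q R - @inner ℂ _ _ Qp Rp‖
          ≤ ‖@inner ℂ _ _ Q R‖ + ‖@inner ℂ _ _ Qp Rp‖ :=
            norm_sub_le _ _
        _ = c + ‖@inner ℂ _ _ Qp Rp‖ := by rw [hc]
    linarith [h1' ▸ h2', hCS]
  -- arithmetic finish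
  set sa : ℝ := ‖Qp‖ with hsa
  set sb : ℝ := ‖Rp‖ with hsb
  have hsa0 : 0 ≤ sa := norm_nonneg _
  have hsb0 : 0 ≤ sb := norm_nonneg _
  have ha0 : 0 ≤ a := by rw [ha]; exact norm_nonneg α
  have hb0 : 0 ≤ b := by rw [hb]; exact norm_nonneg β
  have hc0 : 0 ≤ c := by rw [hc]; exact norm_nonneg _
  clear_value sa sb
  clear hCS hdec hSQ hSR
  clear_value c a b
  clear_value α β Qp Rp
  clear hα hβ hQp hRp haQS hbRS ha hb hc hsa hsb hQ hR hS hSS Qp Rp Q R S α β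
  have hsae : sa ≤ e₁ := by nlinarith
  have hsbe : sb ≤ e₂ := by nlinarith
  have ha1 : a ≤ 1 := by nlinarith [sq_nonneg sa]
  have hb1 : b ≤ 1 := by nlinarith [sq_nonneg sb]
  have hsum : sa + sb < 1 := by nlinarith
  have habpos : sa * sb ≤ a * b := by nlinarith
  have hab1 : a * b ≤ 1 := mul_le_one₀ ha1 hb0 hb1
  have h3 : 0 ≤ a * b - sa * sb := by linarith
  have h4 : (a * b - sa * sb)^2 ≤ c^2 := by nlinarith
  have key5 : (a*b - sa*sb)^2 - (1 - (sa+sb)^2) = 2*(sa*sb)*(1 + sa*sb - a*b) := by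
    linear_combination b^2 * hnQp + (1 - sa^2) * hnRp
  have h5 : 1 - (sa + sb)^2 ≤ (a * b - sa * sb)^2 := by
    have ht0 : 0 ≤ sa * sb := mul_nonneg hsa0 hsb0
    have : 0 ≤ 2*(sa*sb)*(1 + sa*sb - a*b) :=
      mul_nonneg (mul_nonneg (by norm_num) ht0) (by linarith)
    linarith
  have h6 : (sa + sb)^2 ≤ (e₁ + e₂)^2 := by nlinarith
  linarith
end

section
/- Let r(t), p(t), q(t) be real differentiable functions, let χ: [0,T] → ℝ be differentiable, and suppose |ξ(t)⟩ = e^{iq(t)}(cos(r(t)/2)|0⟩ + e^{ip(t)} sin(r(t)/2)|1⟩) solves i·d|ξ⟩/dt = H_ξ(t)|ξ⟩ with H_ξ(t) = I/2 − m(t)·Z/2 + χ̇(t)·X/2 for a real function m(t). Then ṙ(t) = −χ̇(t)·sin(p(t)), and in particular |ṙ(t)| ≤ |χ̇(t)| for all t. -/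
/-- If ξ(t) = e^{iq}(cos(r/2)|0⟩ + e^{ip} sin(r/2)|1⟩) solves the Schrödinger equation
with H_ξ = I/2 − m Z/2 + χ̇ X/2, then ṙ = −χ̇ sin p, and in particular |ṙ| ≤ |χ̇|. -/
theorem stmt10 (r p q χ m r' p' q' χ' : ℝ → ℝ)
    (hr : ∀ t, HasDerivAt r (r' t) t) (hp : ∀ t, HasDerivAt p (p' t) t)
    (hq : ∀ t, HasDerivAt q (q' t) t) (hχ : ∀ t, HasDerivAt χ (χ' t) t)
    (X Z : Matrix (Fin 2) (Fin 2) ℂ) (hX : X = !![0, 1; 1, 0]) (hZ : Z = !![1, 0; 0, -1])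
    (ξ : ℝ → (Fin 2 → ℂ))
    (hξ : ξ = fun t => ![Complex.exp (Complex.I * q t) * Real.cos (r t / 2),
        Complex.exp (Complex.I * q t) * Complex.exp (Complex.I * p t) * Real.sin (r t / 2)])
    (hsch : ∀ t, HasDerivAt ξ ((-Complex.I) •
      (((1/2 : ℂ) • (1 : Matrix (Fin 2) (Fin 2) ℂ) - ((m t : ℂ)/2) • Z
        + ((χ' t : ℂ)/2) • X).mulVec (ξ t))) t) :
    ∀ t, r' t = -(χ' t) * Real.sin (p t) ∧ |r' t| ≤ |χ' t| := by
  intro t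
  -- derivatives of the pieces
  have hc : HasDerivAt (fun t => ((Real.cos (r t / 2) : ℝ) : ℂ))
      ((-Real.sin (r t / 2) * (r' t / 2) : ℝ) : ℂ) t :=
    (((hr t).div_const 2).cos).ofReal_comp
  have hs : HasDerivAt (fun t => ((Real.sin (r t / 2) : ℝ) : ℂ))
      ((Real.cos (r t / 2) * (r' t / 2) : ℝ) : ℂ) t :=
    (((hr t).div_const 2).sin).ofReal_comp
  have he1 : HasDerivAt (fun t => Complex.exp (Complex.I * q t))
      (Complex.exp (Complex.I * q t) * (Complex.I * q' t)) t :=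
    (((hq t).ofReal_comp).const_mul Complex.I).cexp
  have he2 : HasDerivAt (fun t => Complex.exp (Complex.I * p t))
      (Complex.exp (Complex.I * p t) * (Complex.I * p' t)) t :=
    (((hp t).ofReal_comp).const_mul Complex.I).cexp
  have h0d : HasDerivAt (fun t => Complex.exp (Complex.I * q t) * (Real.cos (r t / 2) : ℂ))
      (Complex.exp (Complex.I * q t) * (Complex.I * q' t) * (Real.cos (r t / 2) : ℂ)
        + Complex.exp (Complex.I * q t) * ((-Real.sin (r t / 2) * (r' t / 2) : ℝ) : ℂ)) t :=
    he1.mul hc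
  have h1d : HasDerivAt (fun t => Complex.exp (Complex.I * q t) * Complex.exp (Complex.I * p t)
        * (Real.sin (r t / 2) : ℂ))
      ((Complex.exp (Complex.I * q t) * (Complex.I * q' t) * Complex.exp (Complex.I * p t)
        + Complex.exp (Complex.I * q t) * (Complex.exp (Complex.I * p t) * (Complex.I * p' t)))
          * (Real.sin (r t / 2) : ℂ)
        + Complex.exp (Complex.I * q t) * Complex.exp (Complex.I * p t)
          * ((Real.cos (r t / 2) * (r' t / 2) : ℝ) : ℂ)) t :=
    (he1.mul he2).mul hs
  have hD : HasDerivAt ξ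
      (![Complex.exp (Complex.I * q t) * (Complex.I * q' t) * (Real.cos (r t / 2) : ℂ)
        + Complex.exp (Complex.I * q t) * ((-Real.sin (r t / 2) * (r' t / 2) : ℝ) : ℂ),
        (Complex.exp (Complex.I * q t) * (Complex.I * q' t) * Complex.exp (Complex.I * p t)
        + Complex.exp (Complex.I * q t) * (Complex.exp (Complex.I * p t) * (Complex.I * p' t)))
          * (Real.sin (r t / 2) : ℂ)
        + Complex.exp (Complex.I * q t) * Complex.exp (Complex.I * p t)
          * ((Real.cos (r t / 2) * (r' t / 2) : ℝ) : ℂ)]) t := by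
    rw [hξ]
    rw [hasDerivAt_pi]
    intro i
    fin_cases i
    · simpa using h0d
    · simpa using h1d
  have key := hD.unique (hsch t)
  have h0 := congrFun key 0
  have h1 := congrFun key 1
  simp only [hX, hZ, hξ, Matrix.mulVec, dotProduct, Fin.sum_univ_two,
    Matrix.smul_apply, Matrix.sub_apply, Matrix.add_apply, Matrix.one_apply,
    Matrix.cons_val_zero, Matrix.cons_val_one, Matrix.head_cons, Matrix.head_fin_const,
    Pi.smul_apply, smul_eq_mul, Matrix.cons_val', Matrix.empty_val',
    Matrix.cons_val_fin_one, Matrix.of_apply, if_true, if_false] at h0 h1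
  norm_num at h0 h1
  push_cast at h0 h1
  rw [show ((r t : ℂ)/2) = ((r t / 2 : ℝ) : ℂ) by push_cast; ring, ← Complex.ofReal_cos,
    ← Complex.ofReal_sin] at h0 h1
  have he2eq : Complex.exp (Complex.I * (p t : ℂ)) =
      (Real.cos (p t) : ℂ) + (Real.sin (p t) : ℂ) * Complex.I := by
    rw [mul_comm, Complex.exp_mul_I, ← Complex.ofReal_cos, ← Complex.ofReal_sin]
  have hA : (Complex.I * (q' t : ℂ)) * (Real.cos (r t / 2) : ℂ)
      + (-(Real.sin (r t / 2) : ℂ) * ((r' t : ℂ) / 2))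
      = -Complex.I * (((1:ℂ)/2 - (m t : ℂ)/2) * (Real.cos (r t / 2) : ℂ)
        + ((χ' t : ℂ)/2) * (Complex.exp (Complex.I * (p t : ℂ)) * (Real.sin (r t / 2) : ℂ))) := by
    apply mul_left_cancel₀ (Complex.exp_ne_zero (Complex.I * (q t : ℂ)))
    linear_combination h0
  have hB : (Complex.I * ((q' t : ℂ) + (p' t : ℂ))) * (Real.sin (r t / 2) : ℂ)
      + (Real.cos (r t / 2) : ℂ) * ((r' t : ℂ) / 2)
      = -Complex.I * (((1:ℂ)/2 + (m t : ℂ)/2) * (Real.sin (r t / 2) : ℂ)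
        + ((χ' t : ℂ)/2) * ((Complex.exp (Complex.I * (p t : ℂ)))⁻¹ * (Real.cos (r t / 2) : ℂ))) := by
    apply mul_left_cancel₀ (mul_ne_zero (Complex.exp_ne_zero (Complex.I * (q t : ℂ)))
      (Complex.exp_ne_zero (Complex.I * (p t : ℂ))))
    have hinv : Complex.exp (Complex.I * (p t : ℂ)) * (Complex.exp (Complex.I * (p t : ℂ)))⁻¹ = 1 :=
      mul_inv_cancel₀ (Complex.exp_ne_zero _)
    linear_combination h1 + (Complex.I * ((χ' t : ℂ)/2) * (Real.cos (r t / 2) : ℂ)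
      * Complex.exp (Complex.I * (q t : ℂ))) * hinv
  have hinv2 : (Complex.exp (Complex.I * (p t : ℂ)))⁻¹ =
      (Real.cos (p t) : ℂ) - (Real.sin (p t) : ℂ) * Complex.I := by
    rw [← Complex.exp_neg]
    rw [show -(Complex.I * (p t : ℂ)) = ((-(p t) : ℝ) : ℂ) * Complex.I by push_cast; ring]
    rw [Complex.exp_mul_I, ← Complex.ofReal_cos, ← Complex.ofReal_sin, Real.cos_neg, Real.sin_neg]
    push_cast; ring
  rw [he2eq] at hA
  rw [hinv2] at hB
  rw [Complex.ext_iff] at hA hB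
  simp [Complex.ext_iff, -Complex.ofReal_cos, -Complex.ofReal_sin] at hA hB
  obtain ⟨ha, -⟩ := hA
  obtain ⟨hb, -⟩ := hB
  have h2 := Real.sin_sq_add_cos_sq (r t / 2)
  have hkey : r' t = -(χ' t) * Real.sin (p t) := by
    linear_combination (-2 * Real.sin (r t / 2)) * ha + (2 * Real.cos (r t / 2)) * hb
      + (-(r' t + χ' t * Real.sin (p t))) * h2
  refine ⟨by linarith [hkey], ?_⟩
  rw [hkey, abs_mul, abs_neg]
  exact mul_le_of_le_one_right (abs_nonneg _) (Real.abs_sin_le_one _)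
end

section
/- Run the adiabatic search algorithm with the constant-speed schedule s(t) = t/T on [0,T], where T = 1/ε_c. Then the error-amplitude bound of the general theorem evaluates to d₀ + d₁ = 2ε_c√(1−λ)/λ; that is, d₀ = 2√(λ(1−λ))·ε_c and d₁ = ∫₀ᵀ |d/dt(√(λ(1−λ))·ṡ/Δ_λ³)| dt = 2√(1−λ)(λ^{−1} − √λ)·ε_c, for λ ∈ (0,1). -/
open intervalIntegral in
lemma key14 (lam ε T : ℝ) (h0 : 0 < lam) (h1 : lam < 1) (hε : 0 < ε) (hT : T = 1/ε) :
    (∫ t in (0:ℝ)..T, |deriv (fun t => Real.sqrt (lam*(1-lam)) * deriv (fun u => u / T) t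
        / (Real.sqrt (1 - 4*(t/T)*(1 - t/T)*(1-lam)))^3) t|)
      = 2 * Real.sqrt (1-lam) * (lam⁻¹ - Real.sqrt lam) * ε := by
  have hT0 : 0 < T := by rw [hT]; positivity
  have hTne : T ≠ 0 := ne_of_gt hT0
  have ha0 : 0 < 1 - lam := by linarith
  set C : ℝ := Real.sqrt (lam*(1-lam)) * (1/T) with hC
  have hC0 : 0 < C := by
    apply mul_pos
    · exact Real.sqrt_pos.mpr (by positivity)
    · positivity
  set g : ℝ → ℝ := fun t => 1 - 4*(t/T)*(1 - t/T)*(1-lam) with hg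
  set D : ℝ → ℝ := fun t => 4*(1-lam)/T*(2*t/T-1) with hD
  set x : ℝ → ℝ := fun t => Real.sqrt (g t) with hx
  set F : ℝ → ℝ := fun t => C / (x t)^3 with hF
  set φ : ℝ → ℝ := fun t => -3*C*D t/(2*(x t)^5) with hφ
  have hgpos : ∀ t, 0 < g t := by
    intro t
    have h := sq_nonneg (1 - 2*(t/T))
    have := mul_nonneg ha0.le h
    simp only [hg]
    nlinarith
  have hxpos : ∀ t, 0 < x t := fun t => Real.sqrt_pos.mpr (hgpos t)
  -- derivative of g
  have hgd : ∀ t, HasDerivAt g (D t) t := by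
    intro t
    have hid : HasDerivAt (fun u : ℝ => u / T) (1/T) t := (hasDerivAt_id t).div_const T
    have h2 : HasDerivAt (fun u : ℝ => 1 - u / T) (0 - 1/T) t :=
      (hasDerivAt_const t (1:ℝ)).sub hid
    have h3 : HasDerivAt (fun u : ℝ => 4*(u/T)) (4*(1/T)) t := hid.const_mul 4
    have h4 := (h3.mul h2).mul_const (1-lam)
    have h5 := (hasDerivAt_const t (1:ℝ)).sub h4
    refine h5.congr_deriv ?_
    simp only [hD]
    field_simp
    ring
  have hFd : ∀ t, HasDerivAt F (φ t) t := by
    intro t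
    have hxd : HasDerivAt x (D t / (2 * x t)) t := (hgd t).sqrt (ne_of_gt (hgpos t))
    have hcube : HasDerivAt (fun u => (x u)^3) ((3:ℕ) * (x t)^(3-1) * (D t / (2 * x t))) t :=
      hxd.pow 3
    have hx3 : (x t)^3 ≠ 0 := by have := hxpos t; positivity
    have hdiv := (hasDerivAt_const t C).div hcube hx3
    refine hdiv.congr_deriv ?_
    have hxne : x t ≠ 0 := ne_of_gt (hxpos t)
    simp only [hφ]
    field_simp
    ring
  have hcont : Continuous φ := by
    apply Continuous.div
    · fun_prop
    · apply Continuous.mul continuous_const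
      apply Continuous.pow
      apply Real.continuous_sqrt.comp
      fun_prop
    · intro t
      have := hxpos t
      positivity
  -- rewrite the integrand
  have hderivs : ∀ t : ℝ, deriv (fun u : ℝ => u / T) t = 1/T := by
    intro t
    exact ((hasDerivAt_id t).div_const T).deriv
  have hfun : (fun t => |deriv (fun t => Real.sqrt (lam*(1-lam)) * deriv (fun u => u / T) t
        / (Real.sqrt (1 - 4*(t/T)*(1 - t/T)*(1-lam)))^3) t|) = fun t => |φ t| := by
    funext t
    congr 1
    have : (fun t => Real.sqrt (lam*(1-lam)) * deriv (fun u => u / T) t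
        / (Real.sqrt (1 - 4*(t/T)*(1 - t/T)*(1-lam)))^3) = F := by
      funext u
      rw [hderivs u]
    rw [this]
    first
    | rfl
    | exact (hFd t).deriv
  rw [hfun]
  -- split integral
  have hint : ∀ a b : ℝ, IntervalIntegrable (fun t => |φ t|) MeasureTheory.volume a b :=
    fun a b => (hcont.abs).intervalIntegrable a b
  have hintφ : ∀ a b : ℝ, IntervalIntegrable φ MeasureTheory.volume a b :=
    fun a b => hcont.intervalIntegrable a b
  have hsplit : (∫ t in (0:ℝ)..T, |φ t|)
      = (∫ t in (0:ℝ)..(T/2), |φ t|) + ∫ t in (T/2)..T, |φ t| :=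
    (integral_add_adjacent_intervals (hint 0 (T/2)) (hint (T/2) T)).symm
  have hsign1 : ∀ t ∈ Set.uIcc (0:ℝ) (T/2), |φ t| = φ t := by
    intro t ht
    rw [Set.uIcc_of_le (by linarith : (0:ℝ) ≤ T/2)] at ht
    apply abs_of_nonneg
    have hDle : D t ≤ 0 := by
      simp only [hD]
      have : 2*t/T - 1 ≤ 0 := by
        rw [sub_nonpos, div_le_one hT0]
        linarith [ht.2]
      apply mul_nonpos_of_nonneg_of_nonpos (by positivity) this
    have hx5 : 0 < 2*(x t)^5 := by have := hxpos t; positivity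
    simp only [hφ]
    apply div_nonneg _ hx5.le
    nlinarith
  have hsign2 : ∀ t ∈ Set.uIcc (T/2) T, |φ t| = -φ t := by
    intro t ht
    rw [Set.uIcc_of_le (by linarith : T/2 ≤ T)] at ht
    apply abs_of_nonpos
    have hDge : 0 ≤ D t := by
      simp only [hD]
      have : 0 ≤ 2*t/T - 1 := by
        rw [sub_nonneg, le_div_iff₀ hT0]
        linarith [ht.1]
      apply mul_nonneg (by positivity) this
    have hx5 : 0 < 2*(x t)^5 := by have := hxpos t; positivity
    simp only [hφ]
    apply div_nonpos_of_nonpos_of_nonneg _ hx5.le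
    nlinarith
  have hI1 : (∫ t in (0:ℝ)..(T/2), |φ t|) = F (T/2) - F 0 := by
    rw [integral_congr hsign1]
    exact integral_eq_sub_of_hasDerivAt (fun t _ => hFd t) (hintφ 0 (T/2))
  have hI2 : (∫ t in (T/2)..T, |φ t|) = -(F T - F (T/2)) := by
    rw [integral_congr hsign2, integral_neg]
    congr 1
    exact integral_eq_sub_of_hasDerivAt (fun t _ => hFd t) (hintφ (T/2) T)
  -- values
  have hF0 : F 0 = C := by
    simp only [hF, hx, hg]
    norm_num
  have hFT : F T = C := by
    simp only [hF, hx, hg]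
    rw [div_self hTne]
    norm_num
  have hFh : F (T/2) = C / (lam * Real.sqrt lam) := by
    simp only [hF, hx, hg]
    have h2 : T/2/T = 1/2 := by field_simp
    rw [h2, show (1:ℝ) - 4*(1/2)*(1 - 1/2)*(1-lam) = lam by ring]
    rw [show (Real.sqrt lam)^3 = lam * Real.sqrt lam by
      rw [pow_succ, Real.sq_sqrt h0.le]]
  rw [hsplit, hI1, hI2, hF0, hFT, hFh]
  -- final algebra
  have h1T : (1:ℝ)/T = ε := by rw [hT, one_div_one_div]
  have hsm : Real.sqrt (lam*(1-lam)) = Real.sqrt lam * Real.sqrt (1-lam) :=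
    Real.sqrt_mul h0.le _
  have hsl : 0 < Real.sqrt lam := Real.sqrt_pos.mpr h0
  have hsq : Real.sqrt lam * Real.sqrt lam = lam := Real.mul_self_sqrt h0.le
  rw [hC, h1T, hsm]
  field_simp
  nlinarith [hsq, Real.sqrt_nonneg (1-lam), hε, hsl]

/-- For the constant-speed schedule s(t) = t/T with T = 1/ε_c, the general bound evaluates
to d₀ = 2√(λ(1−λ))ε_c and d₁ = 2√(1−λ)(λ⁻¹ − √λ)ε_c, summing to 2ε_c√(1−λ)/λ. -/
theorem stmt14 (lam ε T : ℝ) (hlam : lam ∈ Set.Ioo (0:ℝ) 1) (hε : 0 < ε) (hT : T = 1/ε) :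
    let s : ℝ → ℝ := fun t => t / T
    deriv s 0 = ε ∧
    2 * Real.sqrt (lam*(1-lam)) * deriv s 0 = 2 * Real.sqrt (lam*(1-lam)) * ε ∧
    (∫ t in (0:ℝ)..T, |deriv (fun t => Real.sqrt (lam*(1-lam)) * deriv s t
        / (Real.sqrt (1 - 4*(s t)*(1 - s t)*(1-lam)))^3) t|)
      = 2 * Real.sqrt (1-lam) * (lam⁻¹ - Real.sqrt lam) * ε ∧
    2 * Real.sqrt (lam*(1-lam)) * ε + 2 * Real.sqrt (1-lam) * (lam⁻¹ - Real.sqrt lam) * ε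
      = 2 * ε * Real.sqrt (1-lam) / lam := by
  obtain ⟨h0, h1⟩ := hlam
  intro s
  have hds : deriv s 0 = ε := by
    show deriv (fun t => t / T) 0 = ε
    rw [show deriv (fun t : ℝ => t / T) 0 = 1/T from ((hasDerivAt_id (0:ℝ)).div_const T).deriv,
      hT, one_div_one_div]
  refine ⟨hds, by rw [hds], ?_, ?_⟩
  · exact key14 lam ε T h0 h1 hε hT
  · rw [Real.sqrt_mul h0.le]
    have hlne : lam ≠ 0 := ne_of_gt h0
    field_simp
    ring
end

section
/- Fix w ∈ (0,1), ε > 0, and λ with w ≤ λ ≤ 3w/(2+w). For the standard schedule (ds/dt = ε·Δ_w(s)²), the function c(s) = ε·Δ_w(s)²·√(λ(1−λ))/Δ_λ(s)³ on [0,1] attains its maximum at s = 1/2 with value c(1/2) = ε·w·√(1−λ)/λ, satisfies c(s) = c(1−s), and is monotonically increasing on [0,1/2]; consequently d₀ + d₁ = 2c(1/2) = 2ε·w·√(1−λ)/λ ≤ 2ε. -/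
lemma Qpos (b : ℝ) (hb0 : 0 < b) (hb1 : b < 1) (s : ℝ) : 0 < 1 - 4*s*(1-s)*b := by
  nlinarith [sq_nonneg (2*s-1)]

lemma hasDerivAt_c (a b C : ℝ) (hb0 : 0 < b) (hb1 : b < 1) (s : ℝ) :
    HasDerivAt (fun s => C * (1 - 4*s*(1-s)*a) / ((1-4*s*(1-s)*b) * Real.sqrt (1-4*s*(1-s)*b)))
      (C * (4*(2*s-1)) * (a*(1-4*s*(1-s)*b) - 3/2*b*(1-4*s*(1-s)*a))
        * Real.sqrt (1-4*s*(1-s)*b) / (1-4*s*(1-s)*b)^3) s := by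
  have hQ : ∀ t : ℝ, 0 < 1 - 4*t*(1-t)*b := Qpos b hb0 hb1
  have hr : 0 < Real.sqrt (1 - 4*s*(1-s)*b) := Real.sqrt_pos.mpr (hQ s)
  have hQd : HasDerivAt (fun t : ℝ => 1 - 4*t*(1-t)*b) (4*b*(2*s-1)) s := by
    have h1 := (hasDerivAt_const s (1:ℝ)).sub ((((hasDerivAt_id s).const_mul (4:ℝ)).mul
      ((hasDerivAt_const s (1:ℝ)).sub (hasDerivAt_id s))).mul_const b)
    refine h1.congr_deriv ?_
    simp; ring
  have hPd : HasDerivAt (fun t : ℝ => C * (1 - 4*t*(1-t)*a)) (C * (4*a*(2*s-1))) s := by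
    have h1 := ((hasDerivAt_const s (1:ℝ)).sub ((((hasDerivAt_id s).const_mul (4:ℝ)).mul
      ((hasDerivAt_const s (1:ℝ)).sub (hasDerivAt_id s))).mul_const a)).const_mul C
    refine h1.congr_deriv ?_
    simp; ring
  have hsq : HasDerivAt (fun t : ℝ => Real.sqrt (1 - 4*t*(1-t)*b))
      (1 / (2 * Real.sqrt (1 - 4*s*(1-s)*b)) * (4*b*(2*s-1))) s :=
    (Real.hasDerivAt_sqrt (ne_of_gt (hQ s))).comp s hQd
  have hden : HasDerivAt (fun t : ℝ => (1-4*t*(1-t)*b) * Real.sqrt (1-4*t*(1-t)*b))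
      ((4*b*(2*s-1)) * Real.sqrt (1-4*s*(1-s)*b)
        + (1-4*s*(1-s)*b) * (1 / (2 * Real.sqrt (1 - 4*s*(1-s)*b)) * (4*b*(2*s-1)))) s :=
    hQd.mul hsq
  have hne : (1-4*s*(1-s)*b) * Real.sqrt (1-4*s*(1-s)*b) ≠ 0 :=
    ne_of_gt (mul_pos (hQ s) hr)
  have := hPd.div hden hne
  refine this.congr_deriv ?_
  set r := Real.sqrt (1-4*s*(1-s)*b) with hrdef
  have hQr : 1-4*s*(1-s)*b = r^2 := (Real.sq_sqrt (le_of_lt (hQ s))).symm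
  rw [hQr]
  field_simp
  ring

/-- Case I of the standard-schedule fixed-point proof: for w ≤ λ ≤ 3w/(2+w),
c(s) = ε Δ_w(s)² √(λ(1−λ))/Δ_λ(s)³ is symmetric about 1/2, increasing on [0,1/2],
maximal at s = 1/2 with c(1/2) = εw√(1−λ)/λ, and d₀ + d₁ = 2c(1/2) ≤ 2ε. -/
theorem stmt16 (w ε lam : ℝ) (hw : w ∈ Set.Ioo (0:ℝ) 1) (hε : 0 < ε)
    (hwl : w ≤ lam) (hl : lam ≤ 3*w/(2+w)) :
    let Δw : ℝ → ℝ := fun s => Real.sqrt (1 - 4*s*(1-s)*(1-w))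
    let Δl : ℝ → ℝ := fun s => Real.sqrt (1 - 4*s*(1-s)*(1-lam))
    let c : ℝ → ℝ := fun s => ε * (Δw s)^2 * Real.sqrt (lam*(1-lam)) / (Δl s)^3
    (∀ s ∈ Set.Icc (0:ℝ) 1, c s ≤ c (1/2)) ∧
    c (1/2) = ε * w * Real.sqrt (1-lam) / lam ∧
    (∀ s ∈ Set.Icc (0:ℝ) 1, c s = c (1-s)) ∧
    MonotoneOn c (Set.Icc 0 (1/2)) ∧
    2 * c 0 + (∫ s in (0:ℝ)..1, |deriv c s|) = 2 * c (1/2) ∧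
    2 * c (1/2) ≤ 2 * ε := by
  intro Δw Δl c
  obtain ⟨hw0, hw1⟩ := hw
  have h2w : (0:ℝ) < 2 + w := by linarith
  have hlam0 : 0 < lam := lt_of_lt_of_le hw0 hwl
  have hkey : lam * (2+w) ≤ 3*w := (le_div_iff₀ h2w).mp hl
  have hlam1 : lam < 1 := by nlinarith
  have hb0 : 0 < 1 - lam := by linarith
  have hb1 : 1 - lam < 1 := by linarith
  have hQ : ∀ t : ℝ, 0 < 1 - 4*t*(1-t)*(1-lam) := Qpos (1-lam) hb0 hb1
  have hP : ∀ t : ℝ, 0 < 1 - 4*t*(1-t)*(1-w) := Qpos (1-w) (by linarith) (by linarith)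
  have hC : 0 < ε * Real.sqrt (lam*(1-lam)) :=
    mul_pos hε (Real.sqrt_pos.mpr (mul_pos hlam0 hb0))
  set C := ε * Real.sqrt (lam*(1-lam)) with hCdef
  -- rewrite c
  have hc : c = fun s => C * (1 - 4*s*(1-s)*(1-w)) /
      ((1-4*s*(1-s)*(1-lam)) * Real.sqrt (1-4*s*(1-s)*(1-lam))) := by
    funext s
    show ε * (Δw s)^2 * Real.sqrt (lam*(1-lam)) / (Δl s)^3 = _
    have h1 : (Δw s)^2 = 1 - 4*s*(1-s)*(1-w) := Real.sq_sqrt (le_of_lt (hP s))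
    have h2 : (Δl s)^3 = (1-4*s*(1-s)*(1-lam)) * Real.sqrt (1-4*s*(1-s)*(1-lam)) := by
      show (Real.sqrt _)^3 = _
      rw [pow_succ, Real.sq_sqrt (le_of_lt (hQ s))]
    rw [h1, h2, hCdef]; ring_nf
  set f' : ℝ → ℝ := fun s => C * (4*(2*s-1)) *
      ((1-w)*(1-4*s*(1-s)*(1-lam)) - 3/2*(1-lam)*(1-4*s*(1-s)*(1-w)))
      * Real.sqrt (1-4*s*(1-s)*(1-lam)) / (1-4*s*(1-s)*(1-lam))^3 with hf'def
  have hder : ∀ s : ℝ, HasDerivAt c (f' s) s := by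
    intro s
    rw [hc]
    exact hasDerivAt_c (1-w) (1-lam) C hb0 hb1 s
  -- sign of the key factor
  have hK : ∀ s : ℝ, (1-w)*(1-4*s*(1-s)*(1-lam)) - 3/2*(1-lam)*(1-4*s*(1-s)*(1-w)) ≤ 0 := by
    intro s
    have hab : 0 ≤ (1-w)*(1-lam) := mul_nonneg (by linarith) (by linarith)
    nlinarith [mul_nonneg hab (sq_nonneg (2*s-1))]
  have hsign1 : ∀ s : ℝ, s ≤ 1/2 → 0 ≤ f' s := by
    intro s hs
    have h1 : 0 ≤ (4*(2*s-1)) * ((1-w)*(1-4*s*(1-s)*(1-lam)) - 3/2*(1-lam)*(1-4*s*(1-s)*(1-w))) := by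
      nlinarith [hK s]
    have h2 : f' s = (C * Real.sqrt (1-4*s*(1-s)*(1-lam)) / (1-4*s*(1-s)*(1-lam))^3) *
        ((4*(2*s-1)) * ((1-w)*(1-4*s*(1-s)*(1-lam)) - 3/2*(1-lam)*(1-4*s*(1-s)*(1-w)))) := by
      rw [hf'def]; ring
    rw [h2]
    exact mul_nonneg (le_of_lt (div_pos (mul_pos hC (Real.sqrt_pos.mpr (hQ s)))
      (pow_pos (hQ s) 3))) h1
  have hsign2 : ∀ s : ℝ, 1/2 ≤ s → f' s ≤ 0 := by
    intro s hs
    have h1 : (4*(2*s-1)) * ((1-w)*(1-4*s*(1-s)*(1-lam)) - 3/2*(1-lam)*(1-4*s*(1-s)*(1-w))) ≤ 0 :=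
      mul_nonpos_of_nonneg_of_nonpos (by linarith) (hK s)
    have h2 : f' s = (C * Real.sqrt (1-4*s*(1-s)*(1-lam)) / (1-4*s*(1-s)*(1-lam))^3) *
        ((4*(2*s-1)) * ((1-w)*(1-4*s*(1-s)*(1-lam)) - 3/2*(1-lam)*(1-4*s*(1-s)*(1-w)))) := by
      rw [hf'def]; ring
    rw [h2]
    exact mul_nonpos_of_nonneg_of_nonpos (le_of_lt (div_pos (mul_pos hC
      (Real.sqrt_pos.mpr (hQ s))) (pow_pos (hQ s) 3))) h1
  have hdiff : Differentiable ℝ c := fun s => (hder s).differentiableAt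
  -- monotone
  have hmono : MonotoneOn c (Set.Icc 0 (1/2)) := by
    apply monotoneOn_of_deriv_nonneg (convex_Icc _ _) hdiff.continuous.continuousOn
      (fun x _ => (hdiff x).differentiableWithinAt)
    intro x hx
    rw [interior_Icc] at hx
    rw [(hder x).deriv]
    exact hsign1 x (le_of_lt hx.2)
  -- symmetry (for all reals)
  have hsymm : ∀ s : ℝ, c s = c (1-s) := by
    intro s
    have e1 : (1:ℝ) - 4*(1-s)*(1-(1-s))*(1-w) = 1 - 4*s*(1-s)*(1-w) := by ring
    have e2 : (1:ℝ) - 4*(1-s)*(1-(1-s))*(1-lam) = 1 - 4*s*(1-s)*(1-lam) := by ring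
    show ε * (Δw s)^2 * Real.sqrt (lam*(1-lam)) / (Δl s)^3
      = ε * (Δw (1-s))^2 * Real.sqrt (lam*(1-lam)) / (Δl (1-s))^3
    have : Δw (1-s) = Δw s := by show Real.sqrt _ = Real.sqrt _; rw [e1]
    rw [this]
    have : Δl (1-s) = Δl s := by show Real.sqrt _ = Real.sqrt _; rw [e2]
    rw [this]
  -- value at 1/2
  have hchalf : c (1/2) = ε * w * Real.sqrt (1-lam) / lam := by
    rw [hc]
    have e1 : (1:ℝ) - 4*(1/2)*(1-1/2)*(1-w) = w := by ring
    have e2 : (1:ℝ) - 4*(1/2)*(1-1/2)*(1-lam) = lam := by ring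
    simp only [e1, e2, hCdef]
    rw [Real.sqrt_mul (le_of_lt hlam0)]
    have hsl : Real.sqrt lam ≠ 0 := ne_of_gt (Real.sqrt_pos.mpr hlam0)
    have hlsq : Real.sqrt lam * Real.sqrt lam = lam := Real.mul_self_sqrt (le_of_lt hlam0)
    field_simp
  -- max
  have hmax : ∀ s ∈ Set.Icc (0:ℝ) 1, c s ≤ c (1/2) := by
    intro s hs
    rcases le_or_gt s (1/2) with h | h
    · exact hmono ⟨hs.1, h⟩ ⟨by norm_num, le_refl _⟩ h
    · rw [hsymm s]
      exact hmono ⟨by linarith [hs.2], by linarith⟩ ⟨by norm_num, le_refl _⟩ (by linarith)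
  -- continuity of f'
  have hf'c : Continuous f' := by
    rw [hf'def]
    apply Continuous.div
    · fun_prop
    · fun_prop
    · exact fun x => ne_of_gt (pow_pos (hQ x) 3)
  have hderiv_eq : deriv c = f' := funext fun s => (hder s).deriv
  have hint : ∀ u v : ℝ, (∫ x in u..v, f' x) = c v - c u := fun u v =>
    intervalIntegral.integral_eq_sub_of_hasDerivAt (fun x _ => hder x)
      (hf'c.intervalIntegrable u v)
  have habsint : ∀ u v : ℝ, IntervalIntegrable (fun s => |deriv c s|) MeasureTheory.volume u v := by
    intro u v
    rw [hderiv_eq]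
    exact hf'c.abs.intervalIntegrable u v
  have hI1 : (∫ s in (0:ℝ)..(1/2), |deriv c s|) = c (1/2) - c 0 := by
    rw [← hint 0 (1/2)]
    apply intervalIntegral.integral_congr
    intro x hx
    rw [Set.uIcc_of_le (by norm_num : (0:ℝ) ≤ 1/2)] at hx
    rw [hderiv_eq]
    exact abs_of_nonneg (hsign1 x hx.2)
  have hI2 : (∫ s in (1/2:ℝ)..1, |deriv c s|) = -(c 1 - c (1/2)) := by
    rw [← hint (1/2) 1, ← intervalIntegral.integral_neg]
    apply intervalIntegral.integral_congr
    intro x hx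
    rw [Set.uIcc_of_le (by norm_num : (1/2:ℝ) ≤ 1)] at hx
    rw [hderiv_eq]
    exact abs_of_nonpos (hsign2 x hx.1)
  have hsplit : (∫ s in (0:ℝ)..1, |deriv c s|) =
      (∫ s in (0:ℝ)..(1/2), |deriv c s|) + ∫ s in (1/2:ℝ)..1, |deriv c s| :=
    (intervalIntegral.integral_add_adjacent_intervals (habsint 0 (1/2)) (habsint (1/2) 1)).symm
  have hc10 : c 1 = c 0 := by
    have := hsymm 1
    simpa using this
  refine ⟨hmax, hchalf, fun s _ => hsymm s, hmono, ?_, ?_⟩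
  · rw [hsplit, hI1, hI2]; linarith
  · rw [hchalf]
    have hs1 : Real.sqrt (1-lam) ≤ 1 := Real.sqrt_le_one.mpr (by linarith)
    have h2 : ε * w * Real.sqrt (1-lam) / lam ≤ ε := by
      rw [div_le_iff₀ hlam0]
      have h3 : ε * w * Real.sqrt (1-lam) ≤ ε * w * 1 :=
        mul_le_mul_of_nonneg_left hs1 (mul_pos hε hw0).le
      nlinarith
    linarith
end

section
/- Fix w ∈ (0,1), ε > 0, and λ with (1+2w)/3 ≤ λ < 1. For the standard schedule, the function c(s) = ε·Δ_w(s)²·√(λ(1−λ))/Δ_λ(s)³ on [0,1] is monotonically decreasing on [0,1/2] and symmetric about s = 1/2, so its total variation is 2(c(0) − c(1/2)); consequently d₀ + d₁ = 4c(0) − 2c(1/2) ≤ 4c(0) = 4ε√(λ(1−λ)) ≤ 2ε, since √(λ(1−λ)) ≤ 1/2. -/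
noncomputable def qfun (k : ℝ) (s : ℝ) : ℝ := 1 - 4*s*(1-s)*k

lemma qfun_deriv (k s : ℝ) : HasDerivAt (qfun k) ((8*s-4)*k) s := by
  have h : (qfun k) = fun x : ℝ => 1 - (4*k)*x + (4*k)*x^2 := by
    funext x; simp [qfun]; ring
  rw [h]
  have h1 : HasDerivAt (fun x : ℝ => 1 - (4*k)*x + (4*k)*x^2)
      (0 - (4*k)*1 + (4*k)*(2*s^1)) s :=
    (((hasDerivAt_const s (1:ℝ)).sub ((hasDerivAt_id s).const_mul (4*k))).add
      ((hasDerivAt_pow 2 s).const_mul (4*k)))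
  convert h1 using 1; ring

lemma qfun_ge (k s : ℝ) (hk : 0 ≤ k) : 1 - k ≤ qfun k s := by
  simp only [qfun]; nlinarith [sq_nonneg (2*s-1)]

lemma qfun_symm (k s : ℝ) : qfun k (1-s) = qfun k s := by
  simp only [qfun]; ring

lemma qfun_cont (k : ℝ) : Continuous (qfun k) := by
  unfold qfun; fun_prop

noncomputable def gfun (w lam ε : ℝ) (s : ℝ) : ℝ :=
  ε * Real.sqrt (lam*(1-lam)) * ((8*s-4) * ((1-w) * qfun (1-lam) s - 3/2 * (1-lam) * qfun (1-w) s))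
    / ((qfun (1-lam) s)^2 * Real.sqrt (qfun (1-lam) s))

/-- Case III of the standard-schedule fixed-point proof: for (1+2w)/3 ≤ λ < 1,
c(s) is symmetric about 1/2 and decreasing on [0,1/2], its total variation is
2(c(0) − c(1/2)), and d₀ + d₁ = 4c(0) − 2c(1/2) ≤ 4c(0) = 4ε√(λ(1−λ)) ≤ 2ε. -/
theorem stmt17 (w ε lam : ℝ) (hw : w ∈ Set.Ioo (0:ℝ) 1) (hε : 0 < ε)
    (hwl : (1+2*w)/3 ≤ lam) (hl : lam < 1) :
    let Δw : ℝ → ℝ := fun s => Real.sqrt (1 - 4*s*(1-s)*(1-w))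
    let Δl : ℝ → ℝ := fun s => Real.sqrt (1 - 4*s*(1-s)*(1-lam))
    let c : ℝ → ℝ := fun s => ε * (Δw s)^2 * Real.sqrt (lam*(1-lam)) / (Δl s)^3
    AntitoneOn c (Set.Icc 0 (1/2)) ∧
    (∀ s ∈ Set.Icc (0:ℝ) 1, c s = c (1-s)) ∧
    (∫ s in (0:ℝ)..1, |deriv c s|) = 2 * (c 0 - c (1/2)) ∧
    2 * c 0 + (∫ s in (0:ℝ)..1, |deriv c s|) = 4 * c 0 - 2 * c (1/2) ∧
    c 0 = ε * Real.sqrt (lam*(1-lam)) ∧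
    4 * c 0 ≤ 2 * ε := by
  intro Δw Δl c
  obtain ⟨hw0, hw1⟩ := hw
  have hlam0 : (0:ℝ) < lam := by linarith
  have hApos : ∀ s, (0:ℝ) < qfun (1-w) s := fun s => lt_of_lt_of_le (by linarith) (qfun_ge _ s (by linarith))
  have hBpos : ∀ s, lam ≤ qfun (1-lam) s := fun s => le_trans (by linarith) (qfun_ge _ s (by linarith))
  have hBpos' : ∀ s, (0:ℝ) < qfun (1-lam) s := fun s => lt_of_lt_of_le hlam0 (hBpos s)
  -- rewrite c
  have hceq : c = fun x => ε * Real.sqrt (lam*(1-lam)) * qfun (1-w) x / (qfun (1-lam) x * Real.sqrt (qfun (1-lam) x)) := by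
    funext x
    show ε * (Real.sqrt (1 - 4*x*(1-x)*(1-w)))^2 * Real.sqrt (lam*(1-lam)) / (Real.sqrt (1 - 4*x*(1-x)*(1-lam)))^3 = _
    rw [Real.sq_sqrt (show (0:ℝ) ≤ 1 - 4*x*(1-x)*(1-w) from le_of_lt (hApos x))]
    rw [pow_succ, Real.sq_sqrt (show (0:ℝ) ≤ 1 - 4*x*(1-x)*(1-lam) from le_of_lt (hBpos' x))]
    simp only [qfun]
    ring
  -- derivative
  have hderiv : ∀ s, HasDerivAt c (gfun w lam ε s) s := by
    intro s
    have hBne : qfun (1-lam) s ≠ 0 := (hBpos' s).ne'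
    have hu0 : (0:ℝ) < Real.sqrt (qfun (1-lam) s) := Real.sqrt_pos.mpr (hBpos' s)
    have hdA : HasDerivAt (qfun (1-w)) ((8*s-4)*(1-w)) s := qfun_deriv _ s
    have hdB : HasDerivAt (qfun (1-lam)) ((8*s-4)*(1-lam)) s := qfun_deriv _ s
    have hdsB : HasDerivAt (fun x => Real.sqrt (qfun (1-lam) x))
        ((8*s-4)*(1-lam) / (2 * Real.sqrt (qfun (1-lam) s))) s := hdB.sqrt hBne
    have hdD : HasDerivAt (fun x => qfun (1-lam) x * Real.sqrt (qfun (1-lam) x))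
        ((8*s-4)*(1-lam) * Real.sqrt (qfun (1-lam) s)
          + qfun (1-lam) s * ((8*s-4)*(1-lam) / (2 * Real.sqrt (qfun (1-lam) s)))) s := hdB.mul hdsB
    have hDne : qfun (1-lam) s * Real.sqrt (qfun (1-lam) s) ≠ 0 := (mul_pos (hBpos' s) hu0).ne'
    have hnum : HasDerivAt (fun x => ε * Real.sqrt (lam*(1-lam)) * qfun (1-w) x)
        (ε * Real.sqrt (lam*(1-lam)) * ((8*s-4)*(1-w))) s := hdA.const_mul _
    have hdiv := hnum.fun_div hdD hDne
    rw [hceq]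
    refine hdiv.congr_deriv ?_
    symm
    have hv : qfun (1-lam) s = (Real.sqrt (qfun (1-lam) s))^2 := (Real.sq_sqrt (hBpos' s).le).symm
    simp only [gfun]
    rw [hv]
    field_simp
    simp only [Real.sqrt_sq hu0.le]
    ring
  have hdiffc : Differentiable ℝ c := fun s => (hderiv s).differentiableAt
  have hderivc : deriv c = gfun w lam ε := funext fun s => (hderiv s).deriv
  -- bracket sign
  have hbr : ∀ s : ℝ, 0 ≤ s → s ≤ 1 → 0 ≤ (1-w) * qfun (1-lam) s - 3/2 * (1-lam) * qfun (1-w) s := by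
    intro s hs0 hs1
    simp only [qfun]
    nlinarith [mul_nonneg (mul_nonneg hs0 (by linarith : (0:ℝ) ≤ 1 - s))
      (mul_nonneg (by linarith : (0:ℝ) ≤ 1 - lam) (by linarith : (0:ℝ) ≤ 1 - w))]
  have hP : 0 ≤ ε * Real.sqrt (lam*(1-lam)) := mul_nonneg hε.le (Real.sqrt_nonneg _)
  have hgle : ∀ s : ℝ, 0 ≤ s → s ≤ 1/2 → gfun w lam ε s ≤ 0 := by
    intro s hs0 hs1
    apply div_nonpos_of_nonpos_of_nonneg
    · nlinarith [mul_nonneg hP (hbr s hs0 (by linarith))]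
    · exact (mul_pos (pow_pos (hBpos' s) 2) (Real.sqrt_pos.mpr (hBpos' s))).le
  have hgge : ∀ s : ℝ, 1/2 ≤ s → s ≤ 1 → 0 ≤ gfun w lam ε s := by
    intro s hs0 hs1
    apply div_nonneg
    · nlinarith [mul_nonneg hP (hbr s (by linarith) hs1)]
    · exact (mul_pos (pow_pos (hBpos' s) 2) (Real.sqrt_pos.mpr (hBpos' s))).le
  -- continuity of g
  have hgcont : Continuous (gfun w lam ε) := by
    apply Continuous.div
    · fun_prop [gfun, qfun]
    · exact ((qfun_cont (1-lam)).pow 2).mul (Real.continuous_sqrt.comp (qfun_cont (1-lam)))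
    · intro x; exact (mul_pos (pow_pos (hBpos' x) 2) (Real.sqrt_pos.mpr (hBpos' x))).ne'
  -- FTC
  have hInt : ∀ a b : ℝ, (∫ s in a..b, gfun w lam ε s) = c b - c a := fun a b =>
    intervalIntegral.integral_eq_sub_of_hasDerivAt (fun x _ => hderiv x)
      (hgcont.intervalIntegrable a b)
  -- symmetry
  have hsym : ∀ s : ℝ, c s = c (1-s) := by
    intro s
    rw [hceq]
    simp only
    rw [qfun_symm, qfun_symm]
  have hc1 : c 1 = c 0 := by
    have := hsym 0
    norm_num at this
    exact this.symm
  have hc0 : c 0 = ε * Real.sqrt (lam*(1-lam)) := by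
    rw [hceq]
    simp only [qfun]
    norm_num
  -- integral of |deriv c|
  have habs : (∫ s in (0:ℝ)..1, |deriv c s|) = 2 * (c 0 - c (1/2)) := by
    simp only [hderivc]
    have h1 : (∫ s in (0:ℝ)..(1/2), |gfun w lam ε s|) = c 0 - c (1/2) := by
      rw [intervalIntegral.integral_congr (g := fun s => -(gfun w lam ε s))
        (fun x hx => by
          rw [Set.uIcc_of_le (by norm_num : (0:ℝ) ≤ 1/2)] at hx
          exact abs_of_nonpos (hgle x hx.1 hx.2))]
      rw [intervalIntegral.integral_neg, hInt]
      ring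
    have h2 : (∫ s in (1/2:ℝ)..1, |gfun w lam ε s|) = c 0 - c (1/2) := by
      rw [intervalIntegral.integral_congr (g := gfun w lam ε)
        (fun x hx => by
          rw [Set.uIcc_of_le (by norm_num : (1/2:ℝ) ≤ 1)] at hx
          exact abs_of_nonneg (hgge x hx.1 hx.2))]
      rw [hInt, hc1]
    rw [← intervalIntegral.integral_add_adjacent_intervals (a := (0:ℝ)) (b := 1/2) (c := 1)
      ((hgcont.abs).intervalIntegrable _ _) ((hgcont.abs).intervalIntegrable _ _), h1, h2]
    ring
  refine ⟨?_, fun s _ => hsym s, habs, by linarith [habs], hc0, ?_⟩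
  · apply antitoneOn_of_deriv_nonpos (convex_Icc 0 (1/2)) hdiffc.continuous.continuousOn
      hdiffc.differentiableOn
    intro x hx
    rw [interior_Icc] at hx
    rw [hderivc]
    exact hgle x hx.1.le (hx.2.le)
  · have hs : Real.sqrt (lam*(1-lam)) ≤ 1/2 := by
      have h4 : Real.sqrt (lam*(1-lam)) ≤ Real.sqrt (1/4) := Real.sqrt_le_sqrt (by nlinarith [sq_nonneg (2*lam-1)])
      have : Real.sqrt (1/4 : ℝ) = 1/2 := by
        rw [show (1/4:ℝ) = (1/2)^2 by norm_num, Real.sqrt_sq (by norm_num : (0:ℝ) ≤ 1/2)]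
      linarith
    rw [hc0]
    nlinarith
end

section
/- Let λ ∈ (0,1), δt > 0, s ∈ [0,1], and set a = (1−s)δt/2, b = s·δt/2. Let H₀ = I/2 − (√λ X + √(1−λ) Z)/2 and H₁ = I/2 − (√λ X − √(1−λ) Z)/2 be 2×2 Hermitian matrices. Then the trace of the unitary exp(−i(1−s)H₀δt)·exp(−i s H₁ δt) equals (up to a global phase e^{−iδt/2}) 2(cos(a−b) − 2λ sin(a) sin(b)): more precisely, exp(−i(1−s)H₀δt)·exp(−i s H₁δt) = e^{−iδt/2}·(cos(γδt/2) I + i sin(γδt/2) n̂·σ) for some real unit vector n̂, where cos(γδt/2) = cos(a−b) − 2λ sin(a) sin(b). -/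
open NormedSpace

lemma exp_smul_invol (A : Matrix (Fin 2) (Fin 2) ℂ) (h : A * A = 1) (z : ℂ) :
    exp (z • A) = Complex.cosh z • (1 : Matrix (Fin 2) (Fin 2) ℂ) + Complex.sinh z • A := by
  letI : SeminormedRing (Matrix (Fin 2) (Fin 2) ℂ) := Matrix.linftyOpSemiNormedRing
  letI : NormedRing (Matrix (Fin 2) (Fin 2) ℂ) := Matrix.linftyOpNormedRing
  letI : NormedAlgebra ℂ (Matrix (Fin 2) (Fin 2) ℂ) := Matrix.linftyOpNormedAlgebra
  have hA2 : A ^ 2 = 1 := by rw [pow_two, h]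
  rw [exp_eq_tsum (𝕂 := ℂ)]
  refine HasSum.tsum_eq ?_
  refine HasSum.even_add_odd ?_ ?_
  · have := (Complex.hasSum_cosh z).smul_const (1 : Matrix (Fin 2) (Fin 2) ℂ)
    convert this using 2 with k
    · rfl
    rw [smul_pow, pow_mul A, hA2, one_pow, smul_smul]
    congr 1
    rw [div_eq_mul_inv, mul_comm]
  · have := (Complex.hasSum_sinh z).smul_const A
    convert this using 2 with k
    · rfl
    rw [smul_pow, pow_succ A, pow_mul A, hA2, one_pow, one_mul, smul_smul]
    congr 1
    rw [div_eq_mul_inv, mul_comm]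

lemma exp_smul_one' (c : ℂ) :
    exp (c • (1 : Matrix (Fin 2) (Fin 2) ℂ)) = Complex.exp c • 1 := by
  rw [exp_smul_invol 1 (one_mul 1) c, ← add_smul, Complex.cosh_add_sinh]

lemma exp_phase_rot (c d : ℂ) (A : Matrix (Fin 2) (Fin 2) ℂ) (h : A * A = 1) :
    exp (c • (1 : Matrix (Fin 2) (Fin 2) ℂ) + d • A)
      = Complex.exp c • (Complex.cosh d • (1 : Matrix (Fin 2) (Fin 2) ℂ) + Complex.sinh d • A) := by
  rw [Matrix.exp_add_of_commute]
  · rw [exp_smul_one', exp_smul_invol A h, Matrix.smul_mul, Matrix.one_mul]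
  · show _ * _ = _ * _
    rw [Matrix.smul_mul, Matrix.mul_smul, Matrix.smul_mul, Matrix.mul_smul, Matrix.one_mul,
      Matrix.mul_one, smul_comm]

set_option maxHeartbeats 2000000 in
/-- One Trotter step of simulated adiabatic search: the product of the two exponentials is,
up to the global phase e^{−iδt/2}, a rotation cos(φ)I + i sin(φ) n̂·σ with
cos φ = cos(a−b) − 2λ sin(a) sin(b), where a = (1−s)δt/2 and b = s δt/2. -/
theorem stmt18 (lam δt s : ℝ) (hlam : lam ∈ Set.Ioo (0:ℝ) 1) (hδt : 0 < δt)
    (hs : s ∈ Set.Icc (0:ℝ) 1) :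
    let a : ℝ := (1-s)*δt/2
    let b : ℝ := s*δt/2
    let X : Matrix (Fin 2) (Fin 2) ℂ := !![0, 1; 1, 0]
    let Y : Matrix (Fin 2) (Fin 2) ℂ := !![0, -Complex.I; Complex.I, 0]
    let Z : Matrix (Fin 2) (Fin 2) ℂ := !![1, 0; 0, -1]
    let H0 : Matrix (Fin 2) (Fin 2) ℂ :=
      (1/2 : ℂ) • 1 - (1/2 : ℂ) • ((Real.sqrt lam : ℂ) • X + (Real.sqrt (1-lam) : ℂ) • Z)
    let H1 : Matrix (Fin 2) (Fin 2) ℂ :=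
      (1/2 : ℂ) • 1 - (1/2 : ℂ) • ((Real.sqrt lam : ℂ) • X - (Real.sqrt (1-lam) : ℂ) • Z)
    ∃ (n : Fin 3 → ℝ) (φ : ℝ),
      (n 0)^2 + (n 1)^2 + (n 2)^2 = 1 ∧
      Real.cos φ = Real.cos (a-b) - 2*lam*Real.sin a*Real.sin b ∧
      NormedSpace.exp ((-Complex.I * (((1-s)*δt : ℝ) : ℂ)) • H0) *
          NormedSpace.exp ((-Complex.I * ((s*δt : ℝ) : ℂ)) • H1)
        = Complex.exp (-Complex.I * ((δt/2 : ℝ) : ℂ)) •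
          ((Real.cos φ : ℂ) • 1 + (Complex.I * (Real.sin φ : ℂ)) •
            ((n 0 : ℂ) • X + (n 1 : ℂ) • Y + (n 2 : ℂ) • Z)) := by
  classical
  obtain ⟨hl0, hl1⟩ := hlam
  dsimp only
  set a : ℝ := (1-s)*δt/2 with ha_def
  set b : ℝ := s*δt/2 with hb_def
  set X : Matrix (Fin 2) (Fin 2) ℂ := !![0, 1; 1, 0] with hX
  set Y : Matrix (Fin 2) (Fin 2) ℂ := !![0, -Complex.I; Complex.I, 0] with hY
  set Z : Matrix (Fin 2) (Fin 2) ℂ := !![1, 0; 0, -1] with hZ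
  set sl : ℝ := Real.sqrt lam with hsl_def
  set cl : ℝ := Real.sqrt (1-lam) with hcl_def
  have hsl : sl^2 = lam := Real.sq_sqrt hl0.le
  have hcl : cl^2 = 1 - lam := Real.sq_sqrt (by linarith)
  set ca : ℝ := Real.cos a with hca_def
  set sa : ℝ := Real.sin a with hsa_def
  set cb : ℝ := Real.cos b with hcb_def
  set sb : ℝ := Real.sin b with hsb_def
  have hpa : sa^2 + ca^2 = 1 := Real.sin_sq_add_cos_sq a
  have hpb : sb^2 + cb^2 = 1 := Real.sin_sq_add_cos_sq b
  -- the Bloch vector (unnormalized)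
  set m1 : ℝ := sl*(sa*cb + ca*sb) with hm1
  set m2 : ℝ := -(2*sl*cl*(sa*sb)) with hm2
  set m3 : ℝ := cl*(sa*cb - ca*sb) with hm3
  have hkey : (Real.cos (a-b) - 2*lam*sa*sb)^2 + (m1^2 + m2^2 + m3^2) = 1 := by
    rw [Real.cos_sub, hm1, hm2, hm3]
    linear_combination ((sa*cb+ca*sb)^2 + 4*sa^2*sb^2*cl^2) * hsl
      + ((sa*cb-ca*sb)^2 + 4*sa^2*sb^2*lam) * hcl + (cb^2+sb^2) * hpa + hpb
  set c : ℝ := Real.cos (a-b) - 2*lam*sa*sb with hc_def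
  have hms : (0:ℝ) ≤ m1^2 + m2^2 + m3^2 := by positivity
  have hc2 : c^2 ≤ 1 := by nlinarith
  set φ : ℝ := Real.arccos c with hφ_def
  have hcφ : Real.cos φ = c := Real.cos_arccos (by nlinarith) (by nlinarith)
  set r : ℝ := Real.sqrt (m1^2 + m2^2 + m3^2) with hr_def
  have hr2 : r^2 = m1^2 + m2^2 + m3^2 := Real.sq_sqrt hms
  have hsφ : Real.sin φ = r := by
    rw [hφ_def, Real.sin_arccos, hr_def]
    congr 1
    linarith
  set n : Fin 3 → ℝ := fun i => if r = 0 then ![1,0,0] i else ![m1,m2,m3] i / r with hn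
  have hmz : r = 0 → m1 = 0 ∧ m2 = 0 ∧ m3 = 0 := by
    intro h0
    have h00 : m1^2 + m2^2 + m3^2 = 0 := by rw [← hr2, h0]; ring
    have e1 : m1^2 = 0 := le_antisymm (by linarith [sq_nonneg m2, sq_nonneg m3]) (sq_nonneg m1)
    have e2 : m2^2 = 0 := le_antisymm (by linarith [sq_nonneg m1, sq_nonneg m3]) (sq_nonneg m2)
    have e3 : m3^2 = 0 := le_antisymm (by linarith [sq_nonneg m1, sq_nonneg m2]) (sq_nonneg m3)
    exact ⟨pow_eq_zero_iff two_ne_zero |>.mp e1, pow_eq_zero_iff two_ne_zero |>.mp e2,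
      pow_eq_zero_iff two_ne_zero |>.mp e3⟩
  have hsn : ∀ i : Fin 3, Real.sin φ * n i = ![m1,m2,m3] i := by
    intro i
    rw [hsφ, hn]
    by_cases h0 : r = 0
    · obtain ⟨e1, e2, e3⟩ := hmz h0
      simp only [h0, if_true]
      fin_cases i <;> simp [e1, e2, e3, h0]
    · simp only [h0, if_false]
      field_simp
  have hunit : (n 0)^2 + (n 1)^2 + (n 2)^2 = 1 := by
    rw [hn]
    by_cases h0 : r = 0
    · simp [h0]
    · simp only [h0, if_false]
      have : r ≠ 0 := h0
      field_simp
      simpa [Matrix.cons_val_zero, Matrix.cons_val_one] using hr2.symm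
  refine ⟨n, φ, hunit, by rw [hcφ], ?_⟩
  set U : Matrix (Fin 2) (Fin 2) ℂ := (sl:ℂ) • X + (cl:ℂ) • Z with hU_def
  set V : Matrix (Fin 2) (Fin 2) ℂ := (sl:ℂ) • X - (cl:ℂ) • Z with hV_def
  have Hsl : ((sl:ℝ):ℂ)^2 = ((lam:ℝ):ℂ) := by exact_mod_cast congrArg Complex.ofReal hsl
  have Hcl : ((cl:ℝ):ℂ)^2 = 1 - ((lam:ℝ):ℂ) := by exact_mod_cast congrArg Complex.ofReal hcl
  have hUU : U * U = 1 := by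
    rw [hU_def, hX, hZ]
    ext i j
    fin_cases i <;> fin_cases j <;>
      simp [Matrix.mul_apply, Fin.sum_univ_two, Matrix.one_apply] <;>
      (first
        | ring1
        | linear_combination Hsl + Hcl)
  have hVV : V * V = 1 := by
    rw [hV_def, hX, hZ]
    ext i j
    fin_cases i <;> fin_cases j <;>
      simp [Matrix.mul_apply, Fin.sum_univ_two, Matrix.one_apply] <;>
      (first
        | ring1
        | linear_combination Hsl + Hcl)
  have hd0 : (-Complex.I * (((1-s)*δt : ℝ) : ℂ)) •
        ((1/2 : ℂ) • (1 : Matrix (Fin 2) (Fin 2) ℂ) - (1/2 : ℂ) • U)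
      = (-(Complex.I * ((a:ℝ):ℂ))) • (1 : Matrix (Fin 2) (Fin 2) ℂ)
        + (Complex.I * ((a:ℝ):ℂ)) • U := by
    rw [ha_def]
    push_cast
    module
  have hd1 : (-Complex.I * ((s*δt : ℝ) : ℂ)) •
        ((1/2 : ℂ) • (1 : Matrix (Fin 2) (Fin 2) ℂ) - (1/2 : ℂ) • V)
      = (-(Complex.I * ((b:ℝ):ℂ))) • (1 : Matrix (Fin 2) (Fin 2) ℂ)
        + (Complex.I * ((b:ℝ):ℂ)) • V := by
    rw [hb_def]
    push_cast
    module
  have hE0 : exp ((-Complex.I * (((1-s)*δt : ℝ) : ℂ)) •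
        ((1/2 : ℂ) • (1 : Matrix (Fin 2) (Fin 2) ℂ) - (1/2 : ℂ) • U))
      = Complex.exp (-(Complex.I * ((a:ℝ):ℂ))) •
          (((ca:ℝ):ℂ) • (1 : Matrix (Fin 2) (Fin 2) ℂ) + (Complex.I * ((sa:ℝ):ℂ)) • U) := by
    rw [hd0, exp_phase_rot _ _ U hUU, mul_comm Complex.I ((a:ℝ):ℂ), Complex.cosh_mul_I,
      Complex.sinh_mul_I, ← Complex.ofReal_cos, ← Complex.ofReal_sin,
      mul_comm ((Real.sin a : ℝ):ℂ) Complex.I, ← hca_def, ← hsa_def]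
  have hE1 : exp ((-Complex.I * ((s*δt : ℝ) : ℂ)) •
        ((1/2 : ℂ) • (1 : Matrix (Fin 2) (Fin 2) ℂ) - (1/2 : ℂ) • V))
      = Complex.exp (-(Complex.I * ((b:ℝ):ℂ))) •
          (((cb:ℝ):ℂ) • (1 : Matrix (Fin 2) (Fin 2) ℂ) + (Complex.I * ((sb:ℝ):ℂ)) • V) := by
    rw [hd1, exp_phase_rot _ _ V hVV, mul_comm Complex.I ((b:ℝ):ℂ), Complex.cosh_mul_I,
      Complex.sinh_mul_I, ← Complex.ofReal_cos, ← Complex.ofReal_sin,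
      mul_comm ((Real.sin b : ℝ):ℂ) Complex.I, ← hcb_def, ← hsb_def]
  rw [hE0, hE1, Matrix.smul_mul, Matrix.mul_smul, smul_smul, ← Complex.exp_add]
  have hab : -(Complex.I*((a:ℝ):ℂ)) + -(Complex.I*((b:ℝ):ℂ)) = -Complex.I * ((δt/2 : ℝ):ℂ) := by
    rw [ha_def, hb_def]
    push_cast
    ring
  rw [hab]
  congr 1
  -- coefficient facts
  have Hc : ((Real.cos φ : ℝ):ℂ)
      = ((ca:ℝ):ℂ)*cb + ((sa:ℝ):ℂ)*sb - 2*((lam:ℝ):ℂ)*((sa:ℝ):ℂ)*sb := by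
    have h : Real.cos φ = ca*cb + sa*sb - 2*lam*sa*sb := by
      rw [hcφ, hc_def, Real.cos_sub, ← hca_def, ← hcb_def, ← hsa_def, ← hsb_def]
    exact_mod_cast congrArg Complex.ofReal h
  have Hs0 : ((Real.sin φ:ℝ):ℂ) * ((n 0 : ℝ):ℂ)
      = ((sl:ℝ):ℂ)*(((sa:ℝ):ℂ)*cb + ((ca:ℝ):ℂ)*sb) := by
    have h := hsn 0
    rw [show (![m1,m2,m3] (0:Fin 3)) = m1 from rfl, hm1] at h
    exact_mod_cast congrArg Complex.ofReal h
  have Hs1 : ((Real.sin φ:ℝ):ℂ) * ((n 1 : ℝ):ℂ)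
      = -(2*((sl:ℝ):ℂ)*((cl:ℝ):ℂ)*(((sa:ℝ):ℂ)*sb)) := by
    have h := hsn 1
    rw [show (![m1,m2,m3] (1:Fin 3)) = m2 from rfl, hm2] at h
    exact_mod_cast congrArg Complex.ofReal h
  have Hs2 : ((Real.sin φ:ℝ):ℂ) * ((n 2 : ℝ):ℂ)
      = ((cl:ℝ):ℂ)*(((sa:ℝ):ℂ)*cb - ((ca:ℝ):ℂ)*sb) := by
    have h := hsn 2
    rw [show (![m1,m2,m3] (2:Fin 3)) = m3 from rfl, hm3] at h
    exact_mod_cast congrArg Complex.ofReal h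
  push_cast at Hc Hs0 Hs1 Hs2
  rw [hU_def, hV_def, hX, hY, hZ]
  ext i j
  fin_cases i <;> fin_cases j <;>
    simp [Matrix.mul_apply, Fin.sum_univ_two, Matrix.one_apply] <;>
    push_cast
  · linear_combination -Hc - Complex.I * Hs2 + (((sa:ℝ):ℂ)*((sb:ℝ):ℂ))*Hcl
      - (((sa:ℝ):ℂ)*((sb:ℝ):ℂ))*Hsl
      + (((sa:ℝ):ℂ)*((sb:ℝ):ℂ)*(((sl:ℝ):ℂ)^2 - ((cl:ℝ):ℂ)^2)) * Complex.I_sq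
  · linear_combination -Complex.I * Hs0 + Complex.I^2 * Hs1
  · linear_combination -Complex.I * Hs0 - Complex.I^2 * Hs1
  · linear_combination -Hc + Complex.I * Hs2 + (((sa:ℝ):ℂ)*((sb:ℝ):ℂ))*Hcl
      - (((sa:ℝ):ℂ)*((sb:ℝ):ℂ))*Hsl
      + (((sa:ℝ):ℂ)*((sb:ℝ):ℂ)*(((sl:ℝ):ℂ)^2 - ((cl:ℝ):ℂ)^2)) * Complex.I_sq
end
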